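/- Maschke's octic polynomial F := x₀⁸+x₁⁸+x₂⁸+x₃⁸ + 14(Σ_{i<j} x_i⁴x_j⁴) + 168 x₀²x₁²x₂²x₃² is invariant under the group G: for every g in the subgroup of GL(4,ℂ) generated by g₁ and g₂ and every v ∈ ℂ⁴, F(g·v) = F(v). -/

import Mathlib

/- Maschke's octic polynomial `F` is invariant under the group `G` generated by
`g₁` and `g₂`: for every `g ∈ G` and `v ∈ ℂ⁴`, `F(g·v) = F(v)`. -/

/-- Maschke's octic polynomial, as a function on `ℂ⁴`. -/
def F (x : Fin 4 → ℂ) : ℂ :=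
  x 0 ^ 8 + x 1 ^ 8 + x 2 ^ 8 + x 3 ^ 8 +
    14 * (x 0 ^ 4 * x 1 ^ 4 + x 0 ^ 4 * x 2 ^ 4 + x 0 ^ 4 * x 3 ^ 4 +
          x 1 ^ 4 * x 2 ^ 4 + x 1 ^ 4 * x 3 ^ 4 + x 2 ^ 4 * x 3 ^ 4) +
    168 * (x 0 ^ 2 * x 1 ^ 2 * x 2 ^ 2 * x 3 ^ 2)

/-- The matrix of `g₁`. -/
noncomputable def M1 : Matrix (Fin 4) (Fin 4) ℂ :=
  !![1, 0, 0, 0;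
     0, 1, 0, 0;
     0, 0, Complex.I, 0;
     0, 0, 0, Complex.I]

/-- The matrix of `g₂`. -/
noncomputable def M2 : Matrix (Fin 4) (Fin 4) ℂ :=
  (1/2 : ℂ) • !![-1, -Complex.I, -Complex.I, -1;
                 Complex.I, 1, -1, -Complex.I;
                 Complex.I, -1, 1, -Complex.I;
                 1, -Complex.I, -Complex.I, 1]

/-- `g₁ = diag(1,1,i,i)` as an element of `GL(4,ℂ)`. -/
noncomputable def g1 : GL (Fin 4) ℂ :=
  Matrix.GeneralLinearGroup.mkOfDetNeZero M1 (by
    simp [M1, Matrix.det_succ_row_zero, Fin.sum_univ_succ])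

/-- `g₂ = (1/2)·[[−1,−i,−i,−1],[i,1,−1,−i],[i,−1,1,−i],[1,−i,−i,1]]` as an element of
`GL(4,ℂ)`. -/
noncomputable def g2 : GL (Fin 4) ℂ :=
  Matrix.GeneralLinearGroup.mkOfDetNeZero M2 (by
    simp [M2, Matrix.det_succ_row_zero, Fin.sum_univ_succ, Fin.succAbove]
    ring_nf
    norm_num [Complex.ext_iff])

/- The matrices `g` with `F (g v) = F v` for all `v` form a subgroup, so it suffices to check the
two generators. For each of them the identity is a polynomial identity over `ℤ[i]`, checked by
expanding and reducing powers of `i` with `i⁴ = 1`. -/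

def MulAction.invariantsSubgroup (G : Type*) {X Y : Type*} [Group G] [MulAction G X]
    (f : X → Y) : Subgroup G where
  carrier := {g | ∀ x, f (g • x) = f x}
  one_mem' x := by rw [one_smul]
  mul_mem' ha hb x := by rw [mul_smul, ha, hb]
  inv_mem' ha x := by rw [← ha, smul_inv_smul]

theorem MulAction.apply_smul_eq_of_mem_closure {G X Y : Type*} [Group G] [MulAction G X]
    {f : X → Y} {s : Set G} (hs : ∀ g ∈ s, ∀ x, f (g • x) = f x) {g : G}
    (hg : g ∈ Subgroup.closure s) (x : X) : f (g • x) = f x :=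
  (Subgroup.closure_le (invariantsSubgroup G f) |>.mpr hs) hg x

open Complex Matrix

theorem M1_mulVec (v : Fin 4 → ℂ) : M1 *ᵥ v = ![v 0, v 1, I * v 2, I * v 3] := by
  ext j
  fin_cases j <;> simp [M1, mulVec, dotProduct, Fin.sum_univ_four]

theorem M2_mulVec (v : Fin 4 → ℂ) :
    M2 *ᵥ v = ![(-v 0 - I * v 1 - I * v 2 - v 3) / 2, (I * v 0 + v 1 - v 2 - I * v 3) / 2,
      (I * v 0 - v 1 + v 2 - I * v 3) / 2, (v 0 - I * v 1 - I * v 2 + v 3) / 2] := by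
  ext j
  fin_cases j <;> simp [M2, mulVec, dotProduct, Fin.sum_univ_four] <;> ring

theorem I_pow_eight : I ^ 8 = 1 := by
  rw [pow_mul I 4 2, I_pow_four, one_pow]

theorem F_M1_mulVec (v : Fin 4 → ℂ) : F (M1 *ᵥ v) = F v := by
  simp only [M1_mulVec, F, cons_val]
  ring_nf
  simp only [I_pow_four, I_pow_eight]
  ring

theorem F_M2_mulVec (v : Fin 4 → ℂ) : F (M2 *ᵥ v) = F v := by
  simp only [M2_mulVec, F, cons_val]
  ring_nf
  simp only [I_pow_four, I_pow_eight]
  ring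

/-- Maschke's octic polynomial `F` is invariant under the group `G` generated by `g₁`
and `g₂`: for every `g ∈ G` and every `v ∈ ℂ⁴`, `F(g·v) = F(v)`. -/
theorem maschke_octic_invariant :
    ∀ g ∈ Subgroup.closure ({g1, g2} : Set (GL (Fin 4) ℂ)),
      ∀ v : Fin 4 → ℂ, F (Matrix.mulVec (g : Matrix (Fin 4) (Fin 4) ℂ) v) = F v := by
  intro g hg
  -- the action of `GL (Fin 4) ℂ` on `Fin 4 → ℂ` is `mulVec` by definition
  refine MulAction.apply_smul_eq_of_mem_closure ?_ hg
  rintro _ (rfl | rfl)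
  · exact F_M1_mulVec
  · exact F_M2_mulVec
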